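/- Let p be a prime, let f : ℂ → ℂ have a primitive F on ℍ, let γ₀, …, γ_{p−1} be real 2×2 matrices with positive determinant, and let a_p ∈ ℂ, a_p ≠ 0, be such that Σ_{j=0}^{p−1} (f|₂γ_j)(z) = a_p·f(z) for all z ∈ ℍ. Let σ be a permutation of {0,…,p−1} with σ(0) = 0, and fix τ ∈ ℍ. For n ∈ ℕ and 0 ≤ a < pⁿ with base-p digits a = Σ_{i<n} aᵢ pⁱ (0 ≤ aᵢ ≤ p−1), define the matrix products g_a = γ_{σ(a_{n−1})} ⋯ γ_{σ(a_1)} γ_{σ(a_0)} and h_a = γ_{σ((p−a_{n−1}) mod p)} ⋯ γ_{σ((p−a_1) mod p)} γ_{σ((p−a_0) mod p)}, and set μ(n,a) = a_p^{−n}·(F(h_a·τ) − F(g_a·τ)). Then μ satisfies the p-adic distribution property: for all n ∈ ℕ and all 0 ≤ a < pⁿ, μ(n,a) = Σ_{j=0}^{p−1} μ(n+1, a + j·pⁿ). -/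

import Mathlib

/-!
The Hecke relation `Σ_j f|₂γ_j = a_p f` is the derivative of `Σ_j F(γ_j·z) − a_p F(z)`, so this
function is constant on `ℍ`. Splitting off the top digit of `a + j pⁿ` writes `g_{a + j pⁿ}` as
`γ_{σ(j)} g_a` and `h_{a + j pⁿ}` as `γ_{σ(−j)} h_a`; as `j` runs through `0, …, p−1`, both
`σ(j)` and `σ(−j)` run through all of `{0, …, p−1}`. Comparing the constant at `h_a·τ` and at
`g_a·τ` gives `Σ_j μ(n+1, a + j pⁿ) = a_p⁻ⁿ⁻¹ · a_p (F(h_a·τ) − F(g_a·τ)) = μ(n, a)`.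
-/

/-- The Möbius action of a real `2×2` matrix on `ℂ`: `A·z = (az+b)/(cz+d)`. -/
noncomputable def moebius (A : Matrix (Fin 2) (Fin 2) ℝ) (z : ℂ) : ℂ :=
  ((A 0 0 : ℂ) * z + (A 0 1 : ℂ)) / ((A 1 0 : ℂ) * z + (A 1 1 : ℂ))

/-- The weight-2 slash of `f : ℂ → ℂ` by `A`: `(f|₂A)(z) = det(A)·(cz+d)⁻²·f(A·z)`. -/
noncomputable def slashTwo (f : ℂ → ℂ) (A : Matrix (Fin 2) (Fin 2) ℝ) (z : ℂ) : ℂ :=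
  (A.det : ℂ) * ((A 1 0 : ℂ) * z + (A 1 1 : ℂ)) ^ (-2 : ℤ) * f (moebius A z)

/-- Given matrices `γ₀, …, γ_{p−1}` and `n, a ∈ ℕ` with base-`p` digits
`a = a₀ + a₁p + ⋯`, the matrix product `γ_{a_{n−1}} ⋯ γ_{a_1} γ_{a_0}`
(leftmost factor indexed by the top digit). -/
def digitProd (p : ℕ) (hp : 0 < p) (γ : Fin p → Matrix (Fin 2) (Fin 2) ℝ) :
    ℕ → ℕ → Matrix (Fin 2) (Fin 2) ℝ
  | 0, _ => 1
  | n + 1, a => digitProd p hp γ n (a / p) * γ ⟨a % p, Nat.mod_lt a hp⟩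

open Complex

section Moebius

variable {A B : Matrix (Fin 2) (Fin 2) ℝ} {z : ℂ}

lemma moebius_denom_ne_zero (hA : A.det ≠ 0) (hz : z.im ≠ 0) :
    (A 1 0 : ℂ) * z + (A 1 1 : ℂ) ≠ 0 := by
  rcases eq_or_ne (A 1 0) 0 with hc | hc
  · have hd : A 1 1 ≠ 0 := by
      rintro hd
      exact hA (by rw [Matrix.det_fin_two, hc, hd]; ring)
    simp [hc, hd]
  · intro h
    have him := congrArg Complex.im h
    simp only [add_im, mul_im, ofReal_re, ofReal_im, zero_mul, add_zero, zero_im] at him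
    exact mul_ne_zero hc hz him

lemma moebius_im (A : Matrix (Fin 2) (Fin 2) ℝ) (z : ℂ) :
    (moebius A z).im = A.det * z.im / normSq ((A 1 0 : ℂ) * z + (A 1 1 : ℂ)) := by
  rw [moebius, div_im, Matrix.det_fin_two]
  simp [normSq_apply, mul_im, mul_re]
  ring

lemma moebius_im_pos (hA : 0 < A.det) (hz : 0 < z.im) : 0 < (moebius A z).im := by
  rw [moebius_im]
  exact div_pos (mul_pos hA hz) (normSq_pos.2 (moebius_denom_ne_zero hA.ne' hz.ne'))

lemma moebius_mul (hA : 0 < A.det) (hB : 0 < B.det) (hz : 0 < z.im) :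
    moebius (A * B) z = moebius A (moebius B z) := by
  have hdB := moebius_denom_ne_zero hB.ne' hz.ne'
  have hdA := moebius_denom_ne_zero hA.ne' (moebius_im_pos hB hz).ne'
  have hdAB := moebius_denom_ne_zero (A := A * B) (by rw [Matrix.det_mul]; positivity) hz.ne'
  set w := moebius B z with hw_def
  have hw : w * ((B 1 0 : ℂ) * z + B 1 1) = (B 0 0 : ℂ) * z + B 0 1 := by
    rw [hw_def, moebius, div_mul_cancel₀ _ hdB]
  unfold moebius
  rw [div_eq_div_iff hdAB hdA]
  simp only [Matrix.mul_apply, Fin.sum_univ_two]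
  push_cast
  linear_combination (-((A 0 0 : ℂ) * A 1 1 - A 0 1 * A 1 0)) * hw

lemma hasDerivAt_moebius (hA : A.det ≠ 0) (hz : z.im ≠ 0) :
    HasDerivAt (moebius A) ((A.det : ℂ) * ((A 1 0 : ℂ) * z + A 1 1) ^ (-2 : ℤ)) z := by
  have hd := moebius_denom_ne_zero hA hz
  have hnum : HasDerivAt (fun w : ℂ => (A 0 0 : ℂ) * w + A 0 1) (A 0 0) z := by
    simpa using ((hasDerivAt_id z).const_mul (A 0 0 : ℂ)).add_const (A 0 1 : ℂ)
  have hden : HasDerivAt (fun w : ℂ => (A 1 0 : ℂ) * w + A 1 1) (A 1 0) z := by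
    simpa using ((hasDerivAt_id z).const_mul (A 1 0 : ℂ)).add_const (A 1 1 : ℂ)
  refine (hnum.div hden hd).congr_deriv ?_
  rw [Matrix.det_fin_two, zpow_neg, zpow_ofNat]
  field_simp
  push_cast
  ring

end Moebius

lemma eq_of_hasDerivAt_zero_of_im_pos {H : ℂ → ℂ} (hH : ∀ z : ℂ, 0 < z.im → HasDerivAt H 0 z)
    {z w : ℂ} (hz : 0 < z.im) (hw : 0 < w.im) : H z = H w :=
  (isOpen_lt continuous_const continuous_im).is_const_of_deriv_eq_zero
    (convex_halfSpace_im_gt 0).isPreconnected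
    (fun x hx => (hH x hx).differentiableAt.differentiableWithinAt)
    (fun x hx => (hH x hx).deriv) hz hw

section Hecke

variable {ι : Type*} [Fintype ι] {f F : ℂ → ℂ} {γ : ι → Matrix (Fin 2) (Fin 2) ℝ}

lemma hasDerivAt_sum_comp_moebius (hF : ∀ z : ℂ, 0 < z.im → HasDerivAt F (f z) z)
    (hdet : ∀ j, 0 < (γ j).det) {z : ℂ} (hz : 0 < z.im) :
    HasDerivAt (fun x => ∑ j, F (moebius (γ j) x)) (∑ j, slashTwo f (γ j) z) z := by
  refine HasDerivAt.fun_sum fun j _ => ?_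
  refine ((hF _ (moebius_im_pos (hdet j) hz)).comp z
    (hasDerivAt_moebius (hdet j).ne' hz.ne')).congr_deriv ?_
  rw [slashTwo]
  ring

lemma sum_comp_moebius_sub_sum_eq (hF : ∀ z : ℂ, 0 < z.im → HasDerivAt F (f z) z)
    (hdet : ∀ j, 0 < (γ j).det) {ap : ℂ}
    (heig : ∀ z : ℂ, 0 < z.im → ∑ j, slashTwo f (γ j) z = ap * f z)
    {z w : ℂ} (hz : 0 < z.im) (hw : 0 < w.im) :
    ∑ j, F (moebius (γ j) w) - ∑ j, F (moebius (γ j) z) = ap * (F w - F z) := by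
  have hconst := eq_of_hasDerivAt_zero_of_im_pos
    (H := fun x => ∑ j, F (moebius (γ j) x) - ap * F x) (fun x hx => by
      refine ((hasDerivAt_sum_comp_moebius hF hdet hx).sub ((hF x hx).const_mul ap)).congr_deriv ?_
      rw [heig x hx, sub_self]) hw hz
  linear_combination hconst

end Hecke

section DigitProd

variable {p : ℕ} (hp : 0 < p) {β : Fin p → Matrix (Fin 2) (Fin 2) ℝ}

lemma digitProd_det_pos (hβ : ∀ j, 0 < (β j).det) (n a : ℕ) :
    0 < (digitProd p hp β n a).det := by
  induction n generalizing a with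
  | zero => simp [digitProd]
  | succ n ih => rw [digitProd, Matrix.det_mul]; exact mul_pos (ih _) (hβ _)

lemma digitProd_succ_add_mul_pow {n a j : ℕ} (ha : a < p ^ n) (hj : j < p) :
    digitProd p hp β (n + 1) (a + j * p ^ n) = β ⟨j, hj⟩ * digitProd p hp β n a := by
  induction n generalizing a with
  | zero =>
    obtain rfl : a = 0 := by simpa using ha
    simp [digitProd, Nat.mod_eq_of_lt hj]
  | succ n ih =>
    have hmod : (a + j * p ^ (n + 1)) % p = a % p := by
      rw [pow_succ, ← mul_assoc, Nat.add_mul_mod_self_right]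
    have hdiv : (a + j * p ^ (n + 1)) / p = a / p + j * p ^ n := by
      rw [pow_succ, ← mul_assoc, Nat.add_mul_div_right _ _ hp]
    have ha' : a / p < p ^ n := Nat.div_lt_of_lt_mul (by rwa [mul_comm, ← pow_succ])
    conv_lhs => rw [digitProd]
    conv_rhs => rw [digitProd]
    simp only [hmod, hdiv]
    rw [ih ha', mul_assoc]

lemma sum_range_comp_moebius_digitProd_succ (hβ : ∀ j, 0 < (β j).det) (G : ℂ → ℂ)
    {τ : ℂ} (hτ : 0 < τ.im) {n a : ℕ} (ha : a < p ^ n) :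
    ∑ j ∈ Finset.range p, G (moebius (digitProd p hp β (n + 1) (a + j * p ^ n)) τ) =
      ∑ j : Fin p, G (moebius (β j) (moebius (digitProd p hp β n a) τ)) := by
  rw [← Fin.sum_univ_eq_sum_range]
  refine Finset.sum_congr rfl fun j _ => ?_
  rw [digitProd_succ_add_mul_pow hp ha j.isLt,
    moebius_mul (hβ j) (digitProd_det_pos hp hβ n a) hτ]

end DigitProd

theorem shimura_quadratic_distribution_property_general (p : ℕ) (hp : p.Prime)
    (f F : ℂ → ℂ) (hF : ∀ z : ℂ, 0 < z.im → HasDerivAt F (f z) z)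
    (γ : Fin p → Matrix (Fin 2) (Fin 2) ℝ) (hdet : ∀ j, 0 < (γ j).det)
    (ap : ℂ) (hap : ap ≠ 0)
    (heig : ∀ z : ℂ, 0 < z.im → ∑ j : Fin p, slashTwo f (γ j) z = ap * f z)
    (σ : Equiv.Perm (Fin p))
    (τ : ℂ) (hτ : 0 < τ.im) :
    ∀ n a : ℕ, a < p ^ n →
      ap ^ (-(n : ℤ)) *
          (F (moebius (digitProd p hp.pos (fun d => γ (σ (-d))) n a) τ) -
            F (moebius (digitProd p hp.pos (fun d => γ (σ d)) n a) τ)) =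
        ∑ j ∈ Finset.range p,
          ap ^ (-((n : ℤ) + 1)) *
            (F (moebius (digitProd p hp.pos (fun d => γ (σ (-d))) (n + 1) (a + j * p ^ n)) τ) -
              F (moebius (digitProd p hp.pos (fun d => γ (σ d)) (n + 1) (a + j * p ^ n)) τ)) := by
  intro n a ha
  have hg := moebius_im_pos
    (digitProd_det_pos hp.pos (β := fun d => γ (σ d)) (fun _ => hdet _) n a) hτ
  have hh := moebius_im_pos
    (digitProd_det_pos hp.pos (β := fun d => γ (σ (-d))) (fun _ => hdet _) n a) hτ
  have reindex_g := Equiv.sum_comp σ fun k =>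
    F (moebius (γ k) (moebius (digitProd p hp.pos (fun d => γ (σ d)) n a) τ))
  have reindex_h := Equiv.sum_comp ((Equiv.neg (Fin p)).trans σ) fun k =>
    F (moebius (γ k) (moebius (digitProd p hp.pos (fun d => γ (σ (-d))) n a) τ))
  rw [← Finset.mul_sum, Finset.sum_sub_distrib,
    sum_range_comp_moebius_digitProd_succ hp.pos (fun _ => hdet _) F hτ ha,
    sum_range_comp_moebius_digitProd_succ hp.pos (fun _ => hdet _) F hτ ha]
  simp only [Equiv.trans_apply, Equiv.neg_apply] at reindex_h
  rw [reindex_g, reindex_h]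
  rw [sum_comp_moebius_sub_sum_eq hF hdet heig hg hh, ← mul_assoc, ← zpow_add_one₀ hap]
  norm_num

/-- Let `p` be prime, `F` a primitive on `ℍ` of `f` with
`Σ_{j<p} f|₂γ_j = a_p·f` on `ℍ` (`a_p ≠ 0`, each `γ_j` of positive determinant), `σ` a
permutation of `{0,…,p−1}` with `σ(0) = 0` and `τ ∈ ℍ`. For `a < pⁿ` with base-`p` digits
`a = Σ aᵢpⁱ`, set `g_a = γ_{σ(a_{n−1})} ⋯ γ_{σ(a_0)}`,
`h_a = γ_{σ((p−a_{n−1}) mod p)} ⋯ γ_{σ((p−a_0) mod p)}` and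
`μ(n,a) = a_p⁻ⁿ·(F(h_a·τ) − F(g_a·τ))`. Then `μ` satisfies the `p`-adic distribution
property `μ(n,a) = Σ_{j<p} μ(n+1, a + j·pⁿ)`. -/
theorem shimura_quadratic_distribution_property (p : ℕ) (hp : p.Prime)
    (f F : ℂ → ℂ) (hF : ∀ z : ℂ, 0 < z.im → HasDerivAt F (f z) z)
    (γ : Fin p → Matrix (Fin 2) (Fin 2) ℝ) (hdet : ∀ j, 0 < (γ j).det)
    (ap : ℂ) (hap : ap ≠ 0)
    (heig : ∀ z : ℂ, 0 < z.im → ∑ j : Fin p, slashTwo f (γ j) z = ap * f z)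
    (σ : Equiv.Perm (Fin p)) (hσ0 : σ ⟨0, hp.pos⟩ = ⟨0, hp.pos⟩)
    (τ : ℂ) (hτ : 0 < τ.im) :
    ∀ n a : ℕ, a < p ^ n →
      ap ^ (-(n : ℤ)) *
          (F (moebius (digitProd p hp.pos (fun d => γ (σ (-d))) n a) τ) -
            F (moebius (digitProd p hp.pos (fun d => γ (σ d)) n a) τ)) =
        ∑ j ∈ Finset.range p,
          ap ^ (-((n : ℤ) + 1)) *
            (F (moebius (digitProd p hp.pos (fun d => γ (σ (-d))) (n + 1) (a + j * p ^ n)) τ) -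
              F (moebius (digitProd p hp.pos (fun d => γ (σ d)) (n + 1) (a + j * p ^ n)) τ)) :=
  shimura_quadratic_distribution_property_general p hp f F hF γ hdet ap hap heig σ τ hτ
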